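/- In c₀, the sequence defined by x_n = n·e_n if n is a perfect square and x_n = Σ_{i=1}^n e_i otherwise is statistically norm bounded and statistically uo-Cauchy, but not statistically uo-convergent. -/

import Mathlib

open scoped Classical

/-- `K ⊆ ℕ` has natural density `a`. -/
def NatDensity (K : Set ℕ) (a : ℝ) : Prop :=
  Filter.Tendsto (fun n => (((Finset.range n).filter (fun k => k ∈ K)).card : ℝ) / n)
    Filter.atTop (nhds a)

/-- Asymptotic density on the lower finite directed set `ℕ × ℕ`. -/
def NatDensity2 (A : Set (ℕ × ℕ)) (a : ℝ) : Prop :=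
  Filter.Tendsto (fun q : ℕ × ℕ =>
      ((((Finset.range (q.1 + 1)) ×ˢ (Finset.range (q.2 + 1))).filter
          (fun r => r ∈ A)).card : ℝ) / ((q.1 + 1) * (q.2 + 1)))
    Filter.atTop (nhds a)

/-- membership in `c₀`: a real null sequence. -/
def IsC0 (f : ℕ → ℝ) : Prop := Filter.Tendsto f Filter.atTop (nhds 0)

/-- A nonnegative sequence `q` (indexed by `ℕ`) statistically order converges to `0`
in `c₀`: it is dominated, for almost all `n`, by a sequence of elements of `c₀`
decreasing along a set of density one with infimum `0` in `c₀`. -/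
def c0StatOrderConvZero (q : ℕ → ℕ → ℝ) : Prop :=
  ∃ P : ℕ → ℕ → ℝ, (∀ n, IsC0 (P n)) ∧
    (∃ K : Set ℕ, NatDensity K 1 ∧
      (∀ j ∈ K, ∀ k ∈ K, j ≤ k → ∀ i, P k i ≤ P j i) ∧
      (∀ k ∈ K, ∀ i, 0 ≤ P k i) ∧
      (∀ w : ℕ → ℝ, IsC0 w → (∀ k ∈ K, ∀ i, w i ≤ P k i) → ∀ i, w i ≤ 0)) ∧
    NatDensity {n | ¬ ∀ i, q n i ≤ P n i} 0

/-- the double-indexed version, over the lower finite directed set `ℕ × ℕ`. -/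
def c0StatOrderConvZero2 (q : ℕ × ℕ → ℕ → ℝ) : Prop :=
  ∃ P : ℕ × ℕ → ℕ → ℝ, (∀ m, IsC0 (P m)) ∧
    (∃ K : Set (ℕ × ℕ), NatDensity2 K 1 ∧
      (∀ j ∈ K, ∀ k ∈ K, j ≤ k → ∀ i, P k i ≤ P j i) ∧
      (∀ k ∈ K, ∀ i, 0 ≤ P k i) ∧
      (∀ w : ℕ → ℝ, IsC0 w → (∀ k ∈ K, ∀ i, w i ≤ P k i) → ∀ i, w i ≤ 0)) ∧
    NatDensity2 {m | ¬ ∀ i, q m i ≤ P m i} 0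

/-- `x` is statistically uo-convergent to `l` in `c₀`. -/
def c0StUOConv (x : ℕ → ℕ → ℝ) (l : ℕ → ℝ) : Prop :=
  ∀ u : ℕ → ℝ, IsC0 u → (∀ i, 0 ≤ u i) →
    c0StatOrderConvZero (fun n i => |x n i - l i| ⊓ u i)

/-- `x` is statistically uo-Cauchy in `c₀`: the double-indexed net `x_n - x_m`
is statistically uo-null. -/
def c0StUOCauchy (x : ℕ → ℕ → ℝ) : Prop :=
  ∀ u : ℕ → ℝ, IsC0 u → (∀ i, 0 ≤ u i) →
    c0StatOrderConvZero2 (fun m i => |x m.1 i - x m.2 i| ⊓ u i)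

/-- `x` is statistically norm bounded (sup norm of `c₀`). -/
def c0StNormBounded (x : ℕ → ℕ → ℝ) : Prop :=
  ∃ C : ℝ, 0 < C ∧ NatDensity {n | C < ⨆ i, |x n i|} 0

/-- The sequence `x_n = n·e_n` if `n` is a perfect square, `x_n = Σ_{i=1}^n e_i`
otherwise, in `c₀`. -/
noncomputable def zseq (n : ℕ) : ℕ → ℝ :=
  if IsSquare n then fun i => if i = n then (n : ℝ) else 0
  else fun i => if 1 ≤ i ∧ i ≤ n then 1 else 0

section Toolkit
open Filter Finset

noncomputable def cset (A : Set ℕ) (n : ℕ) : Finset ℕ :=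
  @Finset.filter _ (fun k => k ∈ A) (fun a => Classical.propDecidable _) (Finset.range n)

lemma mem_cset {A : Set ℕ} {n x : ℕ} : x ∈ cset A n ↔ x < n ∧ x ∈ A := by
  simp [cset]

lemma natDensity_iff (A : Set ℕ) (a : ℝ) : NatDensity A a ↔
    Filter.Tendsto (fun n => ((cset A n).card : ℝ) / n) Filter.atTop (nhds a) := Iff.rfl

lemma natDensity_subset_zero {A B : Set ℕ} (h : A ⊆ B) (hB : NatDensity B 0) :
    NatDensity A 0 := by
  rw [natDensity_iff] at hB ⊢
  refine squeeze_zero (fun n => by positivity) (fun n => ?_) hB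
  apply div_le_div_of_nonneg_right _ (by positivity)
  refine Nat.cast_le.mpr (Finset.card_le_card fun x hx => ?_)
  rw [mem_cset] at hx ⊢
  exact ⟨hx.1, h hx.2⟩

lemma natDensity_union_zero {A B : Set ℕ} (hA : NatDensity A 0) (hB : NatDensity B 0) :
    NatDensity (A ∪ B) 0 := by
  rw [natDensity_iff] at hA hB ⊢
  refine squeeze_zero (f := fun n => ((cset (A ∪ B) n).card : ℝ) / n)
    (g := fun n => ((cset A n).card : ℝ) / n + ((cset B n).card : ℝ) / n)
    (fun n => by positivity) (fun n => ?_) (by simpa using hA.add hB)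
  rw [← add_div]
  apply div_le_div_of_nonneg_right _ (by positivity)
  have h1 : cset (A ∪ B) n ⊆ cset A n ∪ cset B n := by
    intro x hx
    rw [mem_cset] at hx
    rcases hx.2 with h' | h'
    · exact Finset.mem_union_left _ (mem_cset.mpr ⟨hx.1, h'⟩)
    · exact Finset.mem_union_right _ (mem_cset.mpr ⟨hx.1, h'⟩)
  calc ((cset (A ∪ B) n).card : ℝ) ≤ ((cset A n ∪ cset B n).card : ℝ) :=
        Nat.cast_le.mpr (Finset.card_le_card h1)
    _ ≤ _ := by exact_mod_cast Finset.card_union_le _ _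

lemma cset_compl_card {A : Set ℕ} (n : ℕ) : (cset A n).card + (cset Aᶜ n).card = n := by
  have hd : Disjoint (cset A n) (cset Aᶜ n) := by
    rw [Finset.disjoint_left]
    intro x hx hx'
    exact (mem_cset.mp hx').2 (mem_cset.mp hx).2
  have hu : cset A n ∪ cset Aᶜ n = Finset.range n := by
    ext x
    simp only [Finset.mem_union, mem_cset, Finset.mem_range, Set.mem_compl_iff]
    tauto
  have := Finset.card_union_of_disjoint hd
  rw [hu, Finset.card_range] at this
  omega

lemma natDensity_compl {A : Set ℕ} {a : ℝ} (h : NatDensity A a) : NatDensity Aᶜ (1 - a) := by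
  rw [natDensity_iff] at h ⊢
  have key : (fun n : ℕ => 1 - ((cset A n).card : ℝ) / n)
      =ᶠ[atTop] (fun n : ℕ => ((cset Aᶜ n).card : ℝ) / n) := by
    filter_upwards [eventually_ge_atTop 1] with n hn
    have h2 := cset_compl_card (A := A) n
    have hn' : (n:ℝ) ≠ 0 := by positivity
    have : ((cset Aᶜ n).card : ℝ) = (n : ℝ) - (cset A n).card := by
      rw [eq_sub_iff_add_eq]; exact_mod_cast (by omega : (cset Aᶜ n).card + (cset A n).card = n)
    rw [this]
    field_simp
  exact ((tendsto_const_nhds (x := (1:ℝ))).sub h).congr' key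

lemma natDensity_one_unbounded {S : Set ℕ} (h : NatDensity S 1) :
    ∀ N, ∃ n, N ≤ n ∧ n ∈ S := by
  intro N
  by_contra hc
  push_neg at hc
  have hz : NatDensity S 0 := by
    rw [natDensity_iff]
    refine squeeze_zero (g := fun n : ℕ => (N : ℝ) / n) (fun n => by positivity) (fun n => ?_)
      (tendsto_const_div_atTop_nhds_zero_nat (N : ℝ))
    apply div_le_div_of_nonneg_right _ (by positivity)
    have hsub : cset S n ⊆ Finset.range N := by
      intro x hx
      rw [mem_cset] at hx
      rw [Finset.mem_range]
      by_contra hxn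
      exact hc x (by omega) hx.2
    have := Finset.card_le_card hsub
    rw [Finset.card_range] at this
    exact_mod_cast this
  exact one_ne_zero (tendsto_nhds_unique h hz)

lemma natDensity_sq : NatDensity {n : ℕ | IsSquare n} 0 := by
  rw [natDensity_iff]
  have hb : ∀ n, (cset {n : ℕ | IsSquare n} n).card ≤ Nat.sqrt n + 1 := by
    intro n
    have : (cset {n : ℕ | IsSquare n} n).card ≤ (Finset.range (Nat.sqrt n + 1)).card := by
      apply Finset.card_le_card_of_injOn Nat.sqrt
      · intro k hk
        rw [Finset.mem_coe, mem_cset] at hk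
        rw [Finset.mem_coe, Finset.mem_range]
        have := Nat.sqrt_le_sqrt (le_of_lt hk.1)
        omega
      · intro a ha b hb hab
        rw [Finset.mem_coe, mem_cset] at ha hb
        obtain ⟨r, hr⟩ := ha.2
        obtain ⟨s, hs⟩ := hb.2
        subst hr; subst hs
        rw [Nat.sqrt_eq, Nat.sqrt_eq] at hab
        rw [hab]
    simpa using this
  have hsq : Tendsto (fun n : ℕ => ((Nat.sqrt n : ℝ) + 1) / n) atTop (nhds 0) := by
    have h1 : Tendsto (fun n : ℕ => Nat.sqrt n) atTop atTop := by
      apply tendsto_atTop_atTop.mpr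
      intro b
      exact ⟨b * b, fun n hn => by calc b = Nat.sqrt (b*b) := (Nat.sqrt_eq b).symm
        _ ≤ Nat.sqrt n := Nat.sqrt_le_sqrt hn⟩
    have h2 : Tendsto (fun n : ℕ => (2 : ℝ) / (Nat.sqrt n : ℝ)) atTop (nhds 0) :=
      (tendsto_const_div_atTop_nhds_zero_nat (2 : ℝ)).comp h1
    apply squeeze_zero' (f := fun n : ℕ => ((Nat.sqrt n : ℝ) + 1) / n)
      (g := fun n : ℕ => (2:ℝ) / (Nat.sqrt n : ℝ))
    · filter_upwards with n; positivity
    · filter_upwards [eventually_ge_atTop 1] with n hn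
      have h3 : 1 ≤ Nat.sqrt n := by
        have := Nat.sqrt_le_sqrt hn
        simpa using this
      have h4' : Nat.sqrt n ^ 2 ≤ n := Nat.sqrt_le' n
      have hs : (1:ℝ) ≤ (Nat.sqrt n : ℝ) := by exact_mod_cast h3
      have hnn : (Nat.sqrt n : ℝ) ^ 2 ≤ (n:ℝ) := by exact_mod_cast h4'
      rw [div_le_div_iff₀ (by positivity) (by positivity)]
      nlinarith
    · exact h2
  refine squeeze_zero (fun n => by positivity) (fun n => ?_) hsq
  apply div_le_div_of_nonneg_right _ (by positivity)
  exact_mod_cast hb n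

noncomputable def cset2 (A : Set (ℕ × ℕ)) (q : ℕ × ℕ) : Finset (ℕ × ℕ) :=
  @Finset.filter _ (fun r => r ∈ A) (fun r => Classical.propDecidable _)
    ((Finset.range (q.1 + 1)) ×ˢ (Finset.range (q.2 + 1)))

lemma mem_cset2 {A : Set (ℕ × ℕ)} {q r : ℕ × ℕ} :
    r ∈ cset2 A q ↔ r.1 < q.1 + 1 ∧ r.2 < q.2 + 1 ∧ r ∈ A := by
  simp [cset2, Finset.mem_product]; tauto

lemma natDensity2_iff (A : Set (ℕ × ℕ)) (a : ℝ) : NatDensity2 A a ↔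
    Filter.Tendsto (fun q : ℕ × ℕ => ((cset2 A q).card : ℝ) / ((q.1 + 1) * (q.2 + 1)))
      Filter.atTop (nhds a) := Iff.rfl

lemma natDensity2_subset_zero {A B : Set (ℕ × ℕ)} (h : A ⊆ B) (hB : NatDensity2 B 0) :
    NatDensity2 A 0 := by
  rw [natDensity2_iff] at hB ⊢
  refine squeeze_zero (fun q => by positivity) (fun q => ?_) hB
  apply div_le_div_of_nonneg_right _ (by positivity)
  refine Nat.cast_le.mpr (Finset.card_le_card fun x hx => ?_)
  rw [mem_cset2] at hx ⊢
  exact ⟨hx.1, hx.2.1, h hx.2.2⟩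

lemma cset2_compl_card {A : Set (ℕ × ℕ)} (q : ℕ × ℕ) :
    (cset2 A q).card + (cset2 Aᶜ q).card = (q.1 + 1) * (q.2 + 1) := by
  have hd : Disjoint (cset2 A q) (cset2 Aᶜ q) := by
    rw [Finset.disjoint_left]
    intro x hx hx'
    exact (mem_cset2.mp hx').2.2 (mem_cset2.mp hx).2.2
  have hu : cset2 A q ∪ cset2 Aᶜ q = (Finset.range (q.1 + 1)) ×ˢ (Finset.range (q.2 + 1)) := by
    ext x
    simp only [Finset.mem_union, mem_cset2, Finset.mem_product, Finset.mem_range,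
      Set.mem_compl_iff]
    tauto
  have := Finset.card_union_of_disjoint hd
  rw [hu, Finset.card_product, Finset.card_range, Finset.card_range] at this
  omega

lemma natDensity2_compl {A : Set (ℕ × ℕ)} {a : ℝ} (h : NatDensity2 A a) :
    NatDensity2 Aᶜ (1 - a) := by
  rw [natDensity2_iff] at h ⊢
  have key : ∀ q : ℕ × ℕ,
      1 - ((cset2 A q).card : ℝ) / ((q.1 + 1) * (q.2 + 1))
        = ((cset2 Aᶜ q).card : ℝ) / ((q.1 + 1) * (q.2 + 1)) := by
    intro q
    have h2 := cset2_compl_card (A := A) q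
    have hpos : ((q.1 : ℝ) + 1) * ((q.2 : ℝ) + 1) ≠ 0 := by positivity
    have hc : ((cset2 Aᶜ q).card : ℝ) = ((q.1 : ℝ) + 1) * ((q.2 : ℝ) + 1) - (cset2 A q).card := by
      rw [eq_sub_iff_add_eq]
      have : (((q.1 + 1) * (q.2 + 1) : ℕ) : ℝ) = ((q.1 : ℝ) + 1) * ((q.2 : ℝ) + 1) := by push_cast; ring
      rw [← this, ← h2]
      push_cast; ring
    rw [hc]
    field_simp
  exact (((tendsto_const_nhds (x := (1:ℝ))).sub h).congr (fun q => key q))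

lemma natDensity2_sq2 : NatDensity2 {m : ℕ × ℕ | IsSquare m.1 ∨ IsSquare m.2} 0 := by
  rw [natDensity2_iff]
  have hh : Tendsto
      (fun n : ℕ => ((cset {k : ℕ | IsSquare k} (n + 1)).card : ℝ) / ((n + 1 : ℕ) : ℝ))
      atTop (nhds 0) := by
    have h0 := (natDensity_iff {k : ℕ | IsSquare k} 0).mp natDensity_sq
    exact h0.comp (tendsto_add_atTop_nat 1)
  have h1 : Tendsto (fun q : ℕ × ℕ =>
      ((cset {k : ℕ | IsSquare k} (q.1 + 1)).card : ℝ) / ((q.1 + 1 : ℕ) : ℝ)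
        + ((cset {k : ℕ | IsSquare k} (q.2 + 1)).card : ℝ) / ((q.2 + 1 : ℕ) : ℝ))
      atTop (nhds 0) := by
    have hfst : Tendsto (Prod.fst : ℕ × ℕ → ℕ) atTop atTop := by
      rw [← prod_atTop_atTop_eq]; exact tendsto_fst
    have hsnd : Tendsto (Prod.snd : ℕ × ℕ → ℕ) atTop atTop := by
      rw [← prod_atTop_atTop_eq]; exact tendsto_snd
    simpa using (hh.comp hfst).add (hh.comp hsnd)
  refine squeeze_zero (fun q => by positivity) (fun q => ?_) h1
  obtain ⟨a, b⟩ := q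
  dsimp only
  have hcard : (cset2 {m : ℕ × ℕ | IsSquare m.1 ∨ IsSquare m.2} (a, b)).card
      ≤ (cset {k : ℕ | IsSquare k} (a + 1)).card * (b + 1)
        + (a + 1) * (cset {k : ℕ | IsSquare k} (b + 1)).card := by
    have hsub : cset2 {m : ℕ × ℕ | IsSquare m.1 ∨ IsSquare m.2} (a, b)
        ⊆ ((cset {k : ℕ | IsSquare k} (a + 1)) ×ˢ (Finset.range (b + 1)))
          ∪ ((Finset.range (a + 1)) ×ˢ (cset {k : ℕ | IsSquare k} (b + 1))) := by
      intro r hr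
      rw [mem_cset2] at hr
      rcases hr.2.2 with h | h
      · exact Finset.mem_union_left _ (Finset.mem_product.mpr
          ⟨mem_cset.mpr ⟨hr.1, h⟩, Finset.mem_range.mpr hr.2.1⟩)
      · exact Finset.mem_union_right _ (Finset.mem_product.mpr
          ⟨Finset.mem_range.mpr hr.1, mem_cset.mpr ⟨hr.2.1, h⟩⟩)
    calc (cset2 {m : ℕ × ℕ | IsSquare m.1 ∨ IsSquare m.2} (a, b)).card
        ≤ _ := Finset.card_le_card hsub
      _ ≤ _ := Finset.card_union_le _ _
      _ ≤ (cset {k : ℕ | IsSquare k} (a + 1)).card * (b + 1)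
            + (a + 1) * (cset {k : ℕ | IsSquare k} (b + 1)).card := by
          rw [Finset.card_product, Finset.card_product, Finset.card_range, Finset.card_range]
  have heq : ((cset {k : ℕ | IsSquare k} (a + 1)).card : ℝ) / ((a + 1 : ℕ) : ℝ)
      + ((cset {k : ℕ | IsSquare k} (b + 1)).card : ℝ) / ((b + 1 : ℕ) : ℝ)
      = (((cset {k : ℕ | IsSquare k} (a + 1)).card * (b + 1)
          + (a + 1) * (cset {k : ℕ | IsSquare k} (b + 1)).card : ℕ) : ℝ)
        / (((a : ℝ) + 1) * ((b : ℝ) + 1)) := by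
    push_cast
    field_simp
  rw [heq]
  apply div_le_div_of_nonneg_right _ (by positivity)
  exact_mod_cast hcard

lemma not_isSquare_succ_sq (i : ℕ) : ¬ IsSquare ((i + 1) * (i + 1) + 1) := by
  rintro ⟨r, hr⟩
  rcases le_or_gt r (i + 1) with h | h
  · nlinarith [Nat.mul_le_mul h h]
  · have h2 : i + 2 ≤ r := h
    nlinarith [Nat.mul_le_mul h2 h2]

lemma zseq_nonsq {n : ℕ} (hn : ¬ IsSquare n) (i : ℕ) :
    zseq n i = if 1 ≤ i ∧ i ≤ n then 1 else 0 := by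
  rw [zseq, if_neg hn]

noncomputable def useq : ℕ → ℝ := fun i => 1 / ((i : ℝ) + 1)

lemma useq_c0 : IsC0 useq := tendsto_one_div_add_atTop_nhds_zero_nat

lemma useq_pos (i : ℕ) : 0 < useq i := by
  rw [useq]; positivity


end Toolkit

/-- In `c₀`, `(x_n)` is statistically norm bounded and st-uo-Cauchy but not
st-uo-convergent. -/
theorem c0_stuoCauchy_not_stuoConv :
    c0StNormBounded zseq ∧ c0StUOCauchy zseq ∧
      ¬ ∃ l : ℕ → ℝ, IsC0 l ∧ c0StUOConv zseq l := by
  classical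
  refine ⟨⟨2, by norm_num, ?_⟩, ?_, ?_⟩
  · -- statistically norm bounded
    apply natDensity_subset_zero (B := {n : ℕ | IsSquare n}) _ natDensity_sq
    intro n hn
    simp only [Set.mem_setOf_eq] at hn ⊢
    by_contra hns
    apply absurd hn (not_lt.mpr _)
    apply Real.iSup_le _ (by norm_num)
    intro i
    rw [zseq_nonsq hns i]
    by_cases h : 1 ≤ i ∧ i ≤ n <;> simp [h]
  · -- st-uo-Cauchy
    intro u hu hupos
    refine ⟨fun m i => if min m.1 m.2 < i then u i else 0, ?_,
      ⟨{m : ℕ × ℕ | ¬ IsSquare m.1 ∧ ¬ IsSquare m.2}, ?_, ?_, ?_, ?_⟩, ?_⟩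
    · -- IsC0 of each P m
      intro m
      refine hu.congr' ?_
      filter_upwards [Filter.eventually_gt_atTop (min m.1 m.2)] with i hi
      simp [hi]
    · -- density of K is 1
      have hKset : {m : ℕ × ℕ | ¬ IsSquare m.1 ∧ ¬ IsSquare m.2}
          = {m : ℕ × ℕ | IsSquare m.1 ∨ IsSquare m.2}ᶜ := by
        ext m
        simp [not_or]
      rw [hKset]
      simpa only [sub_zero] using natDensity2_compl natDensity2_sq2
    · -- monotone
      intro j hj k hk hjk i
      dsimp only
      have hmin : min j.1 j.2 ≤ min k.1 k.2 := min_le_min hjk.1 hjk.2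
      split_ifs with h1 h2
      · exact le_refl _
      · exact absurd (lt_of_le_of_lt hmin h1) h2
      · exact hupos i
      · exact le_refl _
    · -- nonneg
      intro k hk i
      dsimp only
      split_ifs
      · exact hupos i
      · exact le_refl _
    · -- infimum is zero
      intro w hw hwle i
      have hN : ¬ IsSquare ((i + 1) * (i + 1) + 1) := not_isSquare_succ_sq i
      have hiN : i ≤ (i + 1) * (i + 1) + 1 := by nlinarith
      have := hwle ((i + 1) * (i + 1) + 1, (i + 1) * (i + 1) + 1) ⟨hN, hN⟩ i
      simpa [min_self, not_lt.mpr hiN] using this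
    · -- exceptional set has density 0
      apply natDensity2_subset_zero (B := {m : ℕ × ℕ | IsSquare m.1 ∨ IsSquare m.2}) _
        natDensity2_sq2
      intro m hm
      simp only [Set.mem_setOf_eq] at hm ⊢
      by_contra h
      push_neg at h
      apply hm
      intro i
      by_cases hi : min m.1 m.2 < i
      · simp only [if_pos hi]
        exact inf_le_right
      · push_neg at hi
        have hi1 : i ≤ m.1 := le_trans hi (min_le_left _ _)
        have hi2 : i ≤ m.2 := le_trans hi (min_le_right _ _)
        have heq1 : zseq m.1 i = zseq m.2 i := by
          rw [zseq_nonsq h.1 i, zseq_nonsq h.2 i]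
          by_cases h1 : 1 ≤ i <;> simp [h1, hi1, hi2]
        rw [heq1, sub_self, abs_zero, if_neg (not_lt.mpr hi)]
        exact inf_le_left
  · -- not st-uo convergent
    rintro ⟨l, hl, hconv⟩
    obtain ⟨P, hP0, ⟨K, hK1, hmono, hnonneg, hinf⟩, hbad⟩ :=
      hconv useq useq_c0 (fun i => (useq_pos i).le)
    set G : Set ℕ := (Kᶜ ∪ ({n : ℕ | ¬ ∀ i, |zseq n i - l i| ⊓ useq i ≤ P n i}
      ∪ {n : ℕ | IsSquare n}))ᶜ with hG
    have hGd : NatDensity G 1 := by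
      have h0 : NatDensity (Kᶜ ∪ ({n : ℕ | ¬ ∀ i, |zseq n i - l i| ⊓ useq i ≤ P n i}
          ∪ {n : ℕ | IsSquare n})) 0 :=
        natDensity_union_zero (by simpa only [sub_self] using natDensity_compl hK1)
          (natDensity_union_zero hbad natDensity_sq)
      rw [hG]
      simpa only [sub_zero] using natDensity_compl h0
    have hmem : ∀ n ∈ G, n ∈ K ∧ (∀ i, |zseq n i - l i| ⊓ useq i ≤ P n i) ∧ ¬ IsSquare n := by
      intro n hn
      rw [hG] at hn
      simp only [Set.mem_compl_iff, Set.mem_union, Set.mem_setOf_eq, not_or, not_not] at hn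
      exact ⟨hn.1, hn.2.1, hn.2.2⟩
    set w : ℕ → ℝ := fun i => if 1 ≤ i then |1 - l i| ⊓ useq i else 0 with hww
    have hw0 : IsC0 w := by
      apply squeeze_zero (g := useq) _ _ useq_c0
      · intro i
        rw [hww]
        dsimp only
        split_ifs
        · exact le_min (abs_nonneg _) (useq_pos i).le
        · exact le_refl _
      · intro i
        rw [hww]
        dsimp only
        split_ifs
        · exact inf_le_right
        · exact (useq_pos i).le
    have hwle : ∀ k ∈ K, ∀ i, w i ≤ P k i := by
      intro k hk i
      by_cases h1 : 1 ≤ i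
      · obtain ⟨n, hn_ge, hnG⟩ := natDensity_one_unbounded hGd (max k i)
        obtain ⟨hnK, hngood, hnsq⟩ := hmem n hnG
        have h3 : P n i ≤ P k i := hmono k hk n hnK (le_trans (le_max_left _ _) hn_ge) i
        have hin : i ≤ n := le_trans (le_max_right _ _) hn_ge
        have h4 : zseq n i = 1 := by
          rw [zseq_nonsq hnsq i, if_pos ⟨h1, hin⟩]
        have h2 : |1 - l i| ⊓ useq i ≤ P n i := by
          rw [← h4]; exact hngood i
        calc w i = |1 - l i| ⊓ useq i := by rw [hww]; dsimp only; rw [if_pos h1]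
          _ ≤ P n i := h2
          _ ≤ P k i := h3
      · have hwi : w i = 0 := by rw [hww]; dsimp only; rw [if_neg h1]
        rw [hwi]
        exact hnonneg k hk i
    have hfin := hinf w hw0 hwle
    have hl1 : ∀ i, 1 ≤ i → l i = 1 := by
      intro i hi
      have h5 := hfin i
      rw [hww] at h5
      dsimp only at h5
      rw [if_pos hi] at h5
      have habs : ¬ (0 < |1 - l i|) := by
        intro hab
        have := lt_inf_iff.mpr ⟨hab, useq_pos i⟩
        linarith
      push_neg at habs
      have : |1 - l i| = 0 := le_antisymm habs (abs_nonneg _)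
      have h6 : 1 - l i = 0 := abs_eq_zero.mp this
      linarith
    have hlim : Filter.Tendsto l Filter.atTop (nhds 1) := by
      apply Filter.Tendsto.congr' _ (tendsto_const_nhds (x := (1:ℝ)))
      filter_upwards [Filter.eventually_ge_atTop 1] with i hi
      exact (hl1 i hi).symm
    exact one_ne_zero (tendsto_nhds_unique hlim hl)
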